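/- arXiv:2505.17342 — 5 statements merged into one kernel-verified Lean document; each statement's English description precedes it below -/
import Mathlib

section
/- Performance difference lemma for discounted MDPs: for any two policies π and π' in a finite MDP, J(π') − J(π) = (1/(1−γ)) · E_{s ∼ d^{π'}, a ∼ π'(·|s)}[A^π(s,a)], where d^{π'} is the normalized discounted state-visitation distribution of π' and A^π(s,a) = Q^π(s,a) − V^π(s) is the advantage function of π. -/
open scoped BigOperators

/-- Performance difference lemma for discounted MDPs. -/
theorem performance_difference_lemma
    {S A : Type*} [Fintype S] [Fintype A]
    (γ : ℝ) (hγ0 : 0 ≤ γ) (hγ1 : γ < 1)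
    (P : S → A → S → ℝ) (hPnn : ∀ s a s', 0 ≤ P s a s')
    (hP1 : ∀ s a, ∑ s', P s a s' = 1)
    (r : S → A → ℝ) (ρ : S → ℝ) (hρnn : ∀ s, 0 ≤ ρ s) (hρ1 : ∑ s, ρ s = 1)
    (π π' : S → A → ℝ)
    (hπnn : ∀ s a, 0 ≤ π s a) (hπ1 : ∀ s, ∑ a, π s a = 1)
    (hπ'nn : ∀ s a, 0 ≤ π' s a) (hπ'1 : ∀ s, ∑ a, π' s a = 1)
    (V V' : S → ℝ)
    (hV : ∀ s, V s = ∑ a, π s a * (r s a + γ * ∑ s', P s a s' * V s'))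
    (hV' : ∀ s, V' s = ∑ a, π' s a * (r s a + γ * ∑ s', P s a s' * V' s'))
    (Q : S → A → ℝ) (hQ : ∀ s a, Q s a = r s a + γ * ∑ s', P s a s' * V s')
    (Adv : S → A → ℝ) (hA : ∀ s a, Adv s a = Q s a - V s)
    (dvis' : S → ℝ)
    (hd' : ∀ s, dvis' s = (1 - γ) * ρ s + γ * ∑ s'', ∑ a, dvis' s'' * π' s'' a * P s'' a s)
    (Jπ Jπ' : ℝ) (hJ : Jπ = ∑ s, ρ s * V s) (hJ' : Jπ' = ∑ s, ρ s * V' s) :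
    Jπ' - Jπ = (1 / (1 - γ)) * ∑ s, dvis' s * ∑ a, π' s a * Adv s a := by
  have h1γ : (1:ℝ) - γ ≠ 0 := by linarith
  set Δ : S → ℝ := fun s => V' s - V s with hΔ
  have key : ∀ s, ∑ a, π' s a * Adv s a
      = Δ s - γ * ∑ a, π' s a * ∑ s', P s a s' * Δ s' := by
    intro s
    have term : ∀ a, π' s a * Adv s a
        = π' s a * (r s a + γ * ∑ s', P s a s' * V' s')
          - γ * (π' s a * ∑ s', P s a s' * Δ s') - π' s a * V s := by
      intro a
      have hsub : ∑ s', P s a s' * Δ s'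
          = (∑ s', P s a s' * V' s') - ∑ s', P s a s' * V s' := by
        rw [← Finset.sum_sub_distrib]
        exact Finset.sum_congr rfl (fun x _ => by simp only [hΔ]; ring)
      rw [hA, hQ, hsub]; ring
    rw [Finset.sum_congr rfl (fun a _ => term a), Finset.sum_sub_distrib,
        Finset.sum_sub_distrib, ← Finset.mul_sum, ← Finset.sum_mul, hπ'1, ← hV']
    simp only [hΔ]; ring
  have hρΔ : ∑ s, ρ s * Δ s = Jπ' - Jπ := by
    rw [hJ, hJ', ← Finset.sum_sub_distrib]
    exact Finset.sum_congr rfl (fun x _ => by simp only [hΔ]; ring)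
  have swap : ∑ s, ∑ s'', ∑ a, dvis' s'' * π' s'' a * P s'' a s * Δ s
      = ∑ s'', dvis' s'' * ∑ a, π' s'' a * ∑ s', P s'' a s' * Δ s' := by
    rw [Finset.sum_comm]
    refine Finset.sum_congr rfl (fun s'' _ => ?_)
    rw [Finset.sum_comm, Finset.mul_sum]
    refine Finset.sum_congr rfl (fun a _ => ?_)
    rw [Finset.mul_sum, Finset.mul_sum]
    exact Finset.sum_congr rfl (fun s _ => by ring)
  have visit : ∑ s, dvis' s * Δ s
      = (1 - γ) * (Jπ' - Jπ)
        + γ * ∑ s, dvis' s * ∑ a, π' s a * ∑ s', P s a s' * Δ s' := by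
    have exp : ∀ s, dvis' s * Δ s
        = (1 - γ) * (ρ s * Δ s)
          + γ * ∑ s'', ∑ a, dvis' s'' * π' s'' a * P s'' a s * Δ s := by
      intro s
      rw [hd' s]
      have h2 : (∑ s'', ∑ a, dvis' s'' * π' s'' a * P s'' a s) * Δ s
          = ∑ s'', ∑ a, dvis' s'' * π' s'' a * P s'' a s * Δ s := by
        rw [Finset.sum_mul]
        exact Finset.sum_congr rfl (fun x _ => by rw [Finset.sum_mul])
      rw [add_mul, mul_assoc γ, h2]; ring
    rw [Finset.sum_congr rfl (fun s _ => exp s), Finset.sum_add_distrib,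
        ← Finset.mul_sum, ← Finset.mul_sum, hρΔ, swap]
  have main : ∑ s, dvis' s * ∑ a, π' s a * Adv s a = (1 - γ) * (Jπ' - Jπ) := by
    have step : ∀ s, dvis' s * ∑ a, π' s a * Adv s a
        = dvis' s * Δ s - γ * (dvis' s * ∑ a, π' s a * ∑ s', P s a s' * Δ s') := by
      intro s; rw [key s]; ring
    rw [Finset.sum_congr rfl (fun s _ => step s), Finset.sum_sub_distrib,
        ← Finset.mul_sum, visit]
    ring
  rw [main]; field_simp
end

section
/- Bound on visitation distribution shift: for any two policies π and π' in a finite discounted MDP, the total variation distance between their normalized discounted state-visitation distributions satisfies D_TV(d^{π'} ‖ d^π) ≤ (γ/(1−γ)) · E_{s ∼ d^π}[D_TV(π'(·|s) ‖ π(·|s))]. -/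
/-!
Write `K_π s s' = ∑ a, π s a * P s a s'` for the state kernel of a policy, so that the visitation
distributions are the fixed points `d = (1 - γ) ρ + γ d K_π`. Subtracting the two fixed-point
equations gives `d' - d = γ (d' - d) K_π' + γ d (K_π' - K_π)`. A stochastic kernel does not
increase the `ℓ¹` norm, so `‖d' - d‖₁ ≤ γ ‖d' - d‖₁ + γ ‖d (K_π' - K_π)‖₁`, and since `d ≥ 0` the
last norm is at most `∑ s, d s * ∑ a, |π' s a - π s a|`; it is bounded by viewing `d (K_π' - K_π)`
as the vector `(s, a) ↦ d s * (π' s a - π s a)` pushed through the stochastic kernel `P`.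
-/

open Finset

section StochasticKernel

variable {ι κ : Type*} [Fintype ι] [Fintype κ]

theorem sum_abs_sum_mul_le_sum_abs {K : ι → κ → ℝ} (hK : ∀ x y, 0 ≤ K x y)
    (hK1 : ∀ x, ∑ y, K x y = 1) (v : ι → ℝ) :
    ∑ y, |∑ x, v x * K x y| ≤ ∑ x, |v x| :=
  calc ∑ y, |∑ x, v x * K x y|
      ≤ ∑ y, ∑ x, |v x| * K x y := by
        gcongr with y
        refine (abs_sum_le_sum_abs _ _).trans_eq (sum_congr rfl fun x _ => ?_)
        rw [abs_mul, abs_of_nonneg (hK x y)]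
    _ = ∑ x, |v x| := by
        rw [sum_comm]
        simp only [← mul_sum, hK1, mul_one]

theorem nonneg_of_eq_discounted {γ : ℝ} (hγ0 : 0 ≤ γ) (hγ1 : γ < 1)
    {K : ι → ι → ℝ} (hK : ∀ x y, 0 ≤ K x y) (hK1 : ∀ x, ∑ y, K x y = 1)
    {ρ d : ι → ℝ} (hρ : ∀ s, 0 ≤ ρ s)
    (hd : ∀ s, d s = (1 - γ) * ρ s + γ * ∑ x, d x * K x s) (s : ι) :
    0 ≤ d s := by
  -- The negative part `f` of `d` satisfies `f ≤ γ f K`, and `K` preserves total mass,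
  -- so `∑ f ≤ γ ∑ f` forces `f = 0`.
  set f : ι → ℝ := fun x => max (-d x) 0
  have hf : ∀ x, 0 ≤ f x := fun x => le_max_right _ _
  have hf_le : ∀ y, f y ≤ γ * |∑ x, f x * K x y| := by
    intro y
    have hfK : 0 ≤ ∑ x, f x * K x y := sum_nonneg fun x _ => mul_nonneg (hf x) (hK x y)
    have hneg : ∑ x, -d x * K x y ≤ ∑ x, f x * K x y :=
      sum_le_sum fun x _ => mul_le_mul_of_nonneg_right (le_max_left _ _) (hK x y)
    rw [abs_of_nonneg hfK]
    refine max_le ?_ (mul_nonneg hγ0 hfK)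
    have : -d y = -(1 - γ) * ρ y + γ * ∑ x, -d x * K x y := by
      simp only [hd y, neg_mul, sum_neg_distrib]
      ring
    nlinarith [hρ y, mul_le_mul_of_nonneg_left hneg hγ0]
  have hsum : ∑ x, f x ≤ γ * ∑ x, f x :=
    calc ∑ x, f x ≤ γ * ∑ y, |∑ x, f x * K x y| := by
          rw [mul_sum]; exact sum_le_sum fun y _ => hf_le y
      _ ≤ γ * ∑ x, |f x| :=
          mul_le_mul_of_nonneg_left (sum_abs_sum_mul_le_sum_abs hK hK1 f) hγ0
      _ = γ * ∑ x, f x := by simp only [abs_of_nonneg (hf _)]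
  have hsum0 : ∑ x, f x = 0 := by
    nlinarith [sum_nonneg fun x (_ : x ∈ univ) => hf x]
  have hfs : f s = 0 := (sum_eq_zero_iff_of_nonneg fun x _ => hf x).1 hsum0 s (mem_univ s)
  simpa [f] using hfs

theorem sum_abs_sub_le_of_eq_discounted {γ : ℝ} (hγ0 : 0 ≤ γ)
    {K K' : ι → ι → ℝ} (hK' : ∀ x y, 0 ≤ K' x y) (hK'1 : ∀ x, ∑ y, K' x y = 1)
    {ρ d d' : ι → ℝ}
    (hd : ∀ s, d s = (1 - γ) * ρ s + γ * ∑ x, d x * K x s)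
    (hd' : ∀ s, d' s = (1 - γ) * ρ s + γ * ∑ x, d' x * K' x s) :
    ∑ s, |d' s - d s| ≤
      γ * ∑ s, |d' s - d s| + γ * ∑ s, |∑ x, d x * (K' x s - K x s)| := by
  have hdiff : ∀ s, d' s - d s =
      γ * (∑ x, (d' x - d x) * K' x s + ∑ x, d x * (K' x s - K x s)) := by
    intro s
    have hsplit : ∑ x, (d' x - d x) * K' x s + ∑ x, d x * (K' x s - K x s) =
        ∑ x, d' x * K' x s - ∑ x, d x * K x s := by
      rw [← sum_add_distrib, ← sum_sub_distrib]
      exact sum_congr rfl fun x _ => by ring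
    rw [hsplit, hd' s, hd s]
    ring
  calc ∑ s, |d' s - d s|
      ≤ ∑ s, (γ * |∑ x, (d' x - d x) * K' x s| + γ * |∑ x, d x * (K' x s - K x s)|) := by
        gcongr with s
        rw [hdiff s, abs_mul, abs_of_nonneg hγ0, ← mul_add]
        exact mul_le_mul_of_nonneg_left (abs_add_le _ _) hγ0
    _ = γ * ∑ s, |∑ x, (d' x - d x) * K' x s| + γ * ∑ s, |∑ x, d x * (K' x s - K x s)| := by
        rw [sum_add_distrib, mul_sum, mul_sum]
    _ ≤ γ * ∑ s, |d' s - d s| + γ * ∑ s, |∑ x, d x * (K' x s - K x s)| := by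
        have := sum_abs_sum_mul_le_sum_abs hK' hK'1 (fun x => d' x - d x)
        linarith [mul_le_mul_of_nonneg_left this hγ0]

end StochasticKernel

section PolicyKernel

variable {S A : Type*} [Fintype A]

def policyKernel (π : S → A → ℝ) (P : S → A → S → ℝ) (s s' : S) : ℝ :=
  ∑ a, π s a * P s a s'

variable {P : S → A → S → ℝ}

theorem policyKernel_nonneg (hP : ∀ s a s', 0 ≤ P s a s') {π : S → A → ℝ}
    (hπ : ∀ s a, 0 ≤ π s a) (s s' : S) : 0 ≤ policyKernel π P s s' :=
  sum_nonneg fun a _ => mul_nonneg (hπ s a) (hP s a s')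

theorem sum_policyKernel [Fintype S] (hP1 : ∀ s a, ∑ s', P s a s' = 1) {π : S → A → ℝ}
    (hπ1 : ∀ s, ∑ a, π s a = 1) (s : S) : ∑ s', policyKernel π P s s' = 1 := by
  simp only [policyKernel]
  rw [sum_comm]
  simp only [← mul_sum, hP1, mul_one, hπ1]

theorem sum_sum_mul_policyKernel [Fintype S] (π : S → A → ℝ) (d : S → ℝ) (s : S) :
    ∑ x, ∑ a, d x * π x a * P x a s = ∑ x, d x * policyKernel π P x s := by
  simp only [policyKernel, mul_sum, mul_assoc]

theorem sum_abs_sum_mul_policyKernel_sub_le [Fintype S] (hP : ∀ s a s', 0 ≤ P s a s')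
    (hP1 : ∀ s a, ∑ s', P s a s' = 1) (π π' : S → A → ℝ) {d : S → ℝ} (hd : ∀ s, 0 ≤ d s) :
    ∑ s, |∑ x, d x * (policyKernel π' P x s - policyKernel π P x s)| ≤
      ∑ x, d x * ∑ a, |π' x a - π x a| := by
  have hpush : ∀ s, ∑ x, d x * (policyKernel π' P x s - policyKernel π P x s) =
      ∑ xa : S × A, d xa.1 * (π' xa.1 xa.2 - π xa.1 xa.2) * P xa.1 xa.2 s := by
    intro s
    simp only [Fintype.sum_prod_type, policyKernel, ← sum_sub_distrib, mul_sum, ← sub_mul,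
      mul_assoc]
  simp only [hpush]
  refine (sum_abs_sum_mul_le_sum_abs (K := fun (xa : S × A) s => P xa.1 xa.2 s)
    (fun (xa : S × A) s => hP xa.1 xa.2 s) (fun (xa : S × A) => hP1 xa.1 xa.2) _).trans_eq ?_
  simp only [Fintype.sum_prod_type, abs_mul, abs_of_nonneg (hd _), mul_sum]

end PolicyKernel

theorem visitation_shift_bound_general
    {S A : Type*} [Fintype S] [Fintype A]
    (γ : ℝ) (hγ0 : 0 ≤ γ) (hγ1 : γ < 1)
    (P : S → A → S → ℝ) (hPnn : ∀ s a s', 0 ≤ P s a s')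
    (hP1 : ∀ s a, ∑ s', P s a s' = 1)
    (ρ : S → ℝ) (hρnn : ∀ s, 0 ≤ ρ s)
    (π π' : S → A → ℝ)
    (hπnn : ∀ s a, 0 ≤ π s a) (hπ1 : ∀ s, ∑ a, π s a = 1)
    (hπ'nn : ∀ s a, 0 ≤ π' s a) (hπ'1 : ∀ s, ∑ a, π' s a = 1)
    (dvis dvis' : S → ℝ)
    (hd : ∀ s, dvis s = (1 - γ) * ρ s + γ * ∑ s'', ∑ a, dvis s'' * π s'' a * P s'' a s)
    (hd' : ∀ s, dvis' s = (1 - γ) * ρ s + γ * ∑ s'', ∑ a, dvis' s'' * π' s'' a * P s'' a s) :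
    (1 / 2) * ∑ s, |dvis' s - dvis s|
      ≤ (γ / (1 - γ)) * ∑ s, dvis s * ((1 / 2) * ∑ a, |π' s a - π s a|) := by
  simp only [sum_sum_mul_policyKernel] at hd hd'
  have hdnn : ∀ s, 0 ≤ dvis s :=
    nonneg_of_eq_discounted hγ0 hγ1 (policyKernel_nonneg hPnn hπnn) (sum_policyKernel hP1 hπ1)
      hρnn hd
  have hshift := sum_abs_sub_le_of_eq_discounted hγ0 (policyKernel_nonneg hPnn hπ'nn)
    (sum_policyKernel hP1 hπ'1) hd hd'
  have hpolicy := sum_abs_sum_mul_policyKernel_sub_le hPnn hP1 π π' hdnn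
  have hrhs : ∑ s, dvis s * ((1 / 2) * ∑ a, |π' s a - π s a|) =
      (1 / 2) * ∑ s, dvis s * ∑ a, |π' s a - π s a| := by
    rw [mul_sum]; exact sum_congr rfl fun s _ => by ring
  rw [hrhs, mul_left_comm]
  refine mul_le_mul_of_nonneg_left ?_ (by norm_num)
  rw [div_mul_eq_mul_div, le_div_iff₀ (by linarith)]
  linarith [mul_le_mul_of_nonneg_left hpolicy hγ0]

/-- Bound on visitation distribution shift: the TV distance between the discounted
visitation distributions of two policies is bounded by γ/(1−γ) times the average statewise
TV distance between the policies under the visitation distribution of the first policy. -/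
theorem visitation_shift_bound
    {S A : Type*} [Fintype S] [Fintype A]
    (γ : ℝ) (hγ0 : 0 ≤ γ) (hγ1 : γ < 1)
    (P : S → A → S → ℝ) (hPnn : ∀ s a s', 0 ≤ P s a s')
    (hP1 : ∀ s a, ∑ s', P s a s' = 1)
    (ρ : S → ℝ) (hρnn : ∀ s, 0 ≤ ρ s) (hρ1 : ∑ s, ρ s = 1)
    (π π' : S → A → ℝ)
    (hπnn : ∀ s a, 0 ≤ π s a) (hπ1 : ∀ s, ∑ a, π s a = 1)
    (hπ'nn : ∀ s a, 0 ≤ π' s a) (hπ'1 : ∀ s, ∑ a, π' s a = 1)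
    (dvis dvis' : S → ℝ)
    (hd : ∀ s, dvis s = (1 - γ) * ρ s + γ * ∑ s'', ∑ a, dvis s'' * π s'' a * P s'' a s)
    (hd' : ∀ s, dvis' s = (1 - γ) * ρ s + γ * ∑ s'', ∑ a, dvis' s'' * π' s'' a * P s'' a s) :
    (1 / 2) * ∑ s, |dvis' s - dvis s|
      ≤ (γ / (1 - γ)) * ∑ s, dvis s * ((1 / 2) * ∑ a, |π' s a - π s a|) :=
  visitation_shift_bound_general γ hγ0 hγ1 P hPnn hP1 ρ hρnn π π' hπnn hπ1 hπ'nn hπ'1 dvis dvis' hd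
    hd'
end

section
/- CPO-style reward lower bound: for any two policies π, π' in a finite discounted MDP, J(π') − J(π) ≥ (1/(1−γ)) · E_{s∼d^π, a∼π'}[ A^π(s,a) − (2γ ε^{π'}/(1−γ)) · D_TV(π'‖π)[s] ], where ε^{π'} = max_s |E_{a∼π'(·|s)}[A^π(s,a)]|. -/
open scoped BigOperators

/-- CPO-style reward lower bound (Corollary 1 of Achiam et al.). -/
theorem cpo_reward_lower_bound
    {S A : Type*} [Fintype S] [Fintype A] [Nonempty S]
    (γ : ℝ) (hγ0 : 0 ≤ γ) (hγ1 : γ < 1)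
    (P : S → A → S → ℝ) (hPnn : ∀ s a s', 0 ≤ P s a s')
    (hP1 : ∀ s a, ∑ s', P s a s' = 1)
    (r : S → A → ℝ) (ρ : S → ℝ) (hρnn : ∀ s, 0 ≤ ρ s) (hρ1 : ∑ s, ρ s = 1)
    (π π' : S → A → ℝ)
    (hπnn : ∀ s a, 0 ≤ π s a) (hπ1 : ∀ s, ∑ a, π s a = 1)
    (hπ'nn : ∀ s a, 0 ≤ π' s a) (hπ'1 : ∀ s, ∑ a, π' s a = 1)
    (V V' : S → ℝ)
    (hV : ∀ s, V s = ∑ a, π s a * (r s a + γ * ∑ s', P s a s' * V s'))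
    (hV' : ∀ s, V' s = ∑ a, π' s a * (r s a + γ * ∑ s', P s a s' * V' s'))
    (Adv : S → A → ℝ)
    (hA : ∀ s a, Adv s a = (r s a + γ * ∑ s', P s a s' * V s') - V s)
    (dvis : S → ℝ)
    (hd : ∀ s, dvis s = (1 - γ) * ρ s + γ * ∑ s'', ∑ a, dvis s'' * π s'' a * P s'' a s)
    (Jπ Jπ' : ℝ) (hJ : Jπ = ∑ s, ρ s * V s) (hJ' : Jπ' = ∑ s, ρ s * V' s)
    (ε : ℝ) (hε : ε = ⨆ s, |∑ a, π' s a * Adv s a|) :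
    Jπ' - Jπ ≥ (1 / (1 - γ)) * ∑ s, dvis s *
      ((∑ a, π' s a * Adv s a)
        - (2 * γ * ε / (1 - γ)) * ((1 / 2) * ∑ a, |π' s a - π s a|)) := by
  have h1γ : (0:ℝ) < 1 - γ := by linarith
  -- abbreviations
  set g : S → ℝ := fun s => ∑ a, π' s a * Adv s a with hg
  set Δ : S → ℝ := fun s => V' s - V s with hΔdef
  set B : S → ℝ := fun s => ∑ a, π s a * ∑ s', P s a s' * Δ s' with hBdef
  set B' : S → ℝ := fun s => ∑ a, π' s a * ∑ s', P s a s' * Δ s' with hB'def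
  -- ε bounds
  have hεg : ∀ s, |g s| ≤ ε := by
    intro s
    rw [hε]
    simp only [hg]
    exact le_ciSup (f := fun s => |∑ a, π' s a * Adv s a|)
      (Set.Finite.bddAbove (Set.finite_range _)) s
  have hε0 : 0 ≤ ε := le_trans (abs_nonneg _) (hεg (Classical.arbitrary S))
  -- Bellman-type equation for Δ
  have hΔ : ∀ s, Δ s = g s + γ * B' s := by
    intro s
    have e1 : ∀ a : A, π' s a * ∑ s', P s a s' * Δ s'
        = π' s a * ∑ s', P s a s' * V' s' - π' s a * ∑ s', P s a s' * V s' := by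
      intro a
      rw [← mul_sub]
      congr 1
      rw [← Finset.sum_sub_distrib]
      exact Finset.sum_congr rfl fun s' _ => by simp only [hΔdef]; ring
    have e2 : g s = (∑ a, π' s a * (r s a + γ * ∑ s', P s a s' * V s')) - V s := by
      simp only [hg, hA, mul_sub]
      rw [Finset.sum_sub_distrib, ← Finset.sum_mul, hπ'1, one_mul]
    have e3 : Δ s = (∑ a, π' s a * (r s a + γ * ∑ s', P s a s' * V' s')) - V s := by
      simp only [hΔdef]; rw [hV' s]
    simp only [hB'def]
    rw [e3, e2, Finset.sum_congr rfl fun a _ => e1 a, Finset.sum_sub_distrib, mul_sub]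
    have e4 : ∑ a, π' s a * (r s a + γ * ∑ s', P s a s' * V' s')
        = ∑ a, π' s a * (r s a + γ * ∑ s', P s a s' * V s')
          + γ * ∑ a, π' s a * ∑ s', P s a s' * V' s'
          - γ * ∑ a, π' s a * ∑ s', P s a s' * V s' := by
      rw [Finset.mul_sum, Finset.mul_sum, eq_sub_iff_add_eq, ← Finset.sum_add_distrib,
        ← Finset.sum_add_distrib]
      exact Finset.sum_congr rfl fun a _ => by ring
    rw [e4]; ring
  -- performance difference identity
  have hswap : ∑ s, (∑ s'', ∑ a, dvis s'' * π s'' a * P s'' a s) * Δ s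
      = ∑ s'', dvis s'' * B s'' := by
    have h1 : ∀ s : S, (∑ s'', ∑ a, dvis s'' * π s'' a * P s'' a s) * Δ s
        = ∑ s'', ∑ a, dvis s'' * π s'' a * P s'' a s * Δ s := by
      intro s
      rw [Finset.sum_mul]
      exact Finset.sum_congr rfl fun s'' _ => by rw [Finset.sum_mul]
    rw [Finset.sum_congr rfl fun s _ => h1 s, Finset.sum_comm]
    refine Finset.sum_congr rfl fun s'' _ => ?_
    rw [Finset.sum_comm]
    simp only [hBdef, Finset.mul_sum]
    exact Finset.sum_congr rfl fun a _ =>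
      Finset.sum_congr rfl fun s _ => by ring
  have hperf : (1 - γ) * (Jπ' - Jπ) = (∑ s, dvis s * g s) + γ * ∑ s, dvis s * (B' s - B s) := by
    have h1 : (1 - γ) * (Jπ' - Jπ) = ∑ s, (1 - γ) * ρ s * Δ s := by
      rw [hJ, hJ', ← Finset.sum_sub_distrib, Finset.mul_sum]
      exact Finset.sum_congr rfl fun s _ => by simp only [hΔdef]; ring
    have h2 : ∀ s : S, (1 - γ) * ρ s * Δ s
        = dvis s * Δ s - γ * ((∑ s'', ∑ a, dvis s'' * π s'' a * P s'' a s) * Δ s) := by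
      intro s
      linear_combination (-(Δ s)) * hd s
    rw [h1, Finset.sum_congr rfl fun s _ => h2 s, Finset.sum_sub_distrib, ← Finset.mul_sum,
      hswap]
    have h3 : ∑ s, dvis s * Δ s = (∑ s, dvis s * g s) + γ * ∑ s, dvis s * B' s := by
      rw [Finset.mul_sum, ← Finset.sum_add_distrib]
      refine Finset.sum_congr rfl fun s _ => ?_
      rw [hΔ s]; ring
    rw [h3, Finset.mul_sum, Finset.mul_sum, Finset.mul_sum, add_sub_assoc,
      ← Finset.sum_sub_distrib]
    congr 1
    exact Finset.sum_congr rfl fun s _ => by ring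
  -- nonnegativity of dvis
  have hdnn : ∀ s, 0 ≤ dvis s := by
    set q : S → S → ℝ := fun s'' s => ∑ a, π s'' a * P s'' a s with hq
    have hqnn : ∀ s'' s, 0 ≤ q s'' s := fun s'' s =>
      Finset.sum_nonneg fun a _ => mul_nonneg (hπnn _ _) (hPnn _ _ _)
    have hq1 : ∀ s'', ∑ s, q s'' s = 1 := by
      intro s''
      simp only [hq]
      rw [Finset.sum_comm, Finset.sum_congr rfl fun a _ => by
        rw [← Finset.mul_sum, hP1, mul_one]]
      exact hπ1 s''
    have hd' : ∀ s, dvis s = (1 - γ) * ρ s + γ * ∑ s'', dvis s'' * q s'' s := by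
      intro s
      rw [hd s]
      congr 2
      refine Finset.sum_congr rfl fun s'' _ => ?_
      simp only [hq, Finset.mul_sum]
      exact Finset.sum_congr rfl fun a _ => by ring
    set n : S → ℝ := fun s => max (-dvis s) 0 with hn
    have hnnn : ∀ s, 0 ≤ n s := fun s => le_max_right _ _
    have hstep : ∀ s, n s ≤ γ * ∑ s'', n s'' * q s'' s := by
      intro s
      have h2 : ∑ s'', (-(dvis s'')) * q s'' s ≤ ∑ s'', n s'' * q s'' s :=
        Finset.sum_le_sum fun s'' _ =>
          mul_le_mul_of_nonneg_right (le_max_left _ _) (hqnn _ _)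
      have h3 : 0 ≤ (1 - γ) * ρ s := mul_nonneg h1γ.le (hρnn s)
      have h5 : γ * ∑ s'', (-(dvis s'')) * q s'' s = -(γ * ∑ s'', dvis s'' * q s'' s) := by
        simp only [neg_mul, Finset.sum_neg_distrib]; ring
      have h1 : -dvis s ≤ γ * ∑ s'', n s'' * q s'' s := by
        rw [hd' s]
        have h6 := mul_le_mul_of_nonneg_left h2 hγ0
        linarith
      have h0 : 0 ≤ γ * ∑ s'', n s'' * q s'' s :=
        mul_nonneg hγ0 (Finset.sum_nonneg fun s'' _ => mul_nonneg (hnnn _) (hqnn _ _))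
      exact max_le h1 h0
    have hsum : ∑ s, n s ≤ γ * ∑ s, n s := by
      calc ∑ s, n s ≤ ∑ s, γ * ∑ s'', n s'' * q s'' s :=
            Finset.sum_le_sum fun s _ => hstep s
        _ = γ * ∑ s'', n s'' * ∑ s, q s'' s := by
            rw [← Finset.mul_sum, Finset.sum_comm]
            congr 1
            exact Finset.sum_congr rfl fun s'' _ => (Finset.mul_sum _ _ _).symm
        _ = γ * ∑ s, n s := by
            congr 1
            exact Finset.sum_congr rfl fun s'' _ => by rw [hq1, mul_one]
    have hs0 : ∑ s, n s ≤ 0 := by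
      nlinarith [hsum, Finset.sum_nonneg fun s (_ : s ∈ Finset.univ) => hnnn s]
    intro s
    have hns : n s = 0 :=
      le_antisymm
        (le_trans (Finset.single_le_sum (fun i _ => hnnn i) (Finset.mem_univ s)) hs0)
        (hnnn s)
    have h7 : -dvis s ≤ n s := le_max_left _ _
    rw [hns] at h7
    linarith
  -- sup-norm bound on Δ
  obtain ⟨s0, -, hs0⟩ := Finset.exists_max_image (Finset.univ : Finset S)
    (fun s => |Δ s|) ⟨Classical.arbitrary S, Finset.mem_univ _⟩
  set M : ℝ := |Δ s0| with hM
  have hMb : ∀ s, |Δ s| ≤ M := fun s => hs0 s (Finset.mem_univ s)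
  have hM0 : 0 ≤ M := abs_nonneg _
  have hPΔ : ∀ s a, |∑ s', P s a s' * Δ s'| ≤ M := by
    intro s a
    calc |∑ s', P s a s' * Δ s'| ≤ ∑ s', |P s a s' * Δ s'| :=
          Finset.abs_sum_le_sum_abs _ _
      _ ≤ ∑ s', P s a s' * M := Finset.sum_le_sum fun s' _ => by
          rw [abs_mul, abs_of_nonneg (hPnn s a s')]
          exact mul_le_mul_of_nonneg_left (hMb s') (hPnn s a s')
      _ = M := by rw [← Finset.sum_mul, hP1, one_mul]
  have hB'b : ∀ s, |B' s| ≤ M := by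
    intro s
    simp only [hB'def]
    calc |∑ a, π' s a * ∑ s', P s a s' * Δ s'|
        ≤ ∑ a, |π' s a * ∑ s', P s a s' * Δ s'| := Finset.abs_sum_le_sum_abs _ _
      _ ≤ ∑ a, π' s a * M := Finset.sum_le_sum fun a _ => by
          rw [abs_mul, abs_of_nonneg (hπ'nn s a)]
          exact mul_le_mul_of_nonneg_left (hPΔ s a) (hπ'nn s a)
      _ = M := by rw [← Finset.sum_mul, hπ'1, one_mul]
  have hMle : M ≤ ε + γ * M := by
    calc M = |Δ s0| := rfl
      _ = |g s0 + γ * B' s0| := by rw [hΔ s0]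
      _ ≤ |g s0| + |γ * B' s0| := abs_add_le _ _
      _ = |g s0| + γ * |B' s0| := by rw [abs_mul, abs_of_nonneg hγ0]
      _ ≤ ε + γ * M := add_le_add (hεg s0) (mul_le_mul_of_nonneg_left (hB'b s0) hγ0)
  have hMε : M ≤ ε / (1 - γ) := by
    rw [le_div_iff₀ h1γ]; nlinarith
  -- bound on B' - B
  have hBB : ∀ s, |B' s - B s| ≤ M * ∑ a, |π' s a - π s a| := by
    intro s
    have e : B' s - B s = ∑ a, (π' s a - π s a) * ∑ s', P s a s' * Δ s' := by
      simp only [hB'def, hBdef, ← Finset.sum_sub_distrib]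
      exact Finset.sum_congr rfl fun a _ => by ring
    rw [e]
    calc |∑ a, (π' s a - π s a) * ∑ s', P s a s' * Δ s'|
        ≤ ∑ a, |(π' s a - π s a) * ∑ s', P s a s' * Δ s'| :=
          Finset.abs_sum_le_sum_abs _ _
      _ ≤ ∑ a, |π' s a - π s a| * M := Finset.sum_le_sum fun a _ => by
          rw [abs_mul]
          exact mul_le_mul_of_nonneg_left (hPΔ s a) (abs_nonneg _)
      _ = M * ∑ a, |π' s a - π s a| := by
          rw [← Finset.sum_mul, mul_comm]
  -- final combination
  have key : ∑ s, dvis s * ((∑ a, π' s a * Adv s a)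
        - (2 * γ * ε / (1 - γ)) * ((1 / 2) * ∑ a, |π' s a - π s a|))
      ≤ (1 - γ) * (Jπ' - Jπ) := by
    rw [hperf, Finset.mul_sum, ← Finset.sum_add_distrib]
    refine Finset.sum_le_sum fun s _ => ?_
    have hsa : (0:ℝ) ≤ ∑ a, |π' s a - π s a| :=
      Finset.sum_nonneg fun a _ => abs_nonneg _
    have habs : -(M * ∑ a, |π' s a - π s a|) ≤ B' s - B s := (abs_le.mp (hBB s)).1
    have hMc : M * ∑ a, |π' s a - π s a| ≤ (ε / (1 - γ)) * ∑ a, |π' s a - π s a| :=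
      mul_le_mul_of_nonneg_right hMε hsa
    have h1 : γ * (dvis s * (-(M * ∑ a, |π' s a - π s a|))) ≤ γ * (dvis s * (B' s - B s)) :=
      mul_le_mul_of_nonneg_left (mul_le_mul_of_nonneg_left habs (hdnn s)) hγ0
    have h2 : γ * (dvis s * (-((ε / (1 - γ)) * ∑ a, |π' s a - π s a|)))
        ≤ γ * (dvis s * (-(M * ∑ a, |π' s a - π s a|))) :=
      mul_le_mul_of_nonneg_left
        (mul_le_mul_of_nonneg_left (neg_le_neg hMc) (hdnn s)) hγ0
    have h3 : dvis s * ((∑ a, π' s a * Adv s a)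
          - (2 * γ * ε / (1 - γ)) * ((1 / 2) * ∑ a, |π' s a - π s a|))
        = dvis s * g s
          + γ * (dvis s * (-((ε / (1 - γ)) * ∑ a, |π' s a - π s a|))) := by
      simp only [hg]
      field_simp
      ring
    rw [h3]
    exact add_le_add le_rfl (le_trans h2 h1)
  rw [ge_iff_le]
  calc (1 / (1 - γ)) * ∑ s, dvis s * ((∑ a, π' s a * Adv s a)
        - (2 * γ * ε / (1 - γ)) * ((1 / 2) * ∑ a, |π' s a - π s a|))
      ≤ (1 / (1 - γ)) * ((1 - γ) * (Jπ' - Jπ)) :=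
        mul_le_mul_of_nonneg_left key (by positivity)
    _ = Jπ' - Jπ := by field_simp
end

section
/- CPO-style cost upper bound: for any two policies π, π' and any cost function C with discounted cost return J_C, J_C(π') − J_C(π) ≤ (1/(1−γ)) · E_{s∼d^π, a∼π'}[ A_C^π(s,a) + (2γ ε_C^{π'}/(1−γ)) · D_TV(π'‖π)[s] ], where A_C^π is the cost-advantage of π and ε_C^{π'} = max_s |E_{a∼π'}[A_C^π(s,a)]|. -/
/-! Put `f = V_C^{π'} - V_C^π` and `δ(s) = E_{a∼π'} A_C^π(s,a)`. The Bellman equation of `π'`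
gives `f = δ + γ P_{π'} f`, so `‖f‖_∞ ≤ ε_C / (1 - γ)` since `P_{π'}` is row-stochastic. The
visitation equation `d = (1 - γ) ρ + γ d P_π` turns `(1 - γ) ⟨ρ, f⟩` into
`⟨d, f - γ P_π f⟩ = ⟨d, δ + γ (P_{π'} - P_π) f⟩`, and statewise
`((P_{π'} - P_π) f)(s) ≤ ‖π'(s) - π(s)‖₁ ‖f‖_∞ = 2 D_TV(π'‖π)[s] ‖f‖_∞`.
Weighting by `d` is monotone because the same equation forces `d ≥ 0`: its negative part `N`
satisfies `∑ N ≤ γ ∑ N`. -/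

open Finset Matrix

section Stochastic

variable {n : Type*} [Fintype n]

lemma abs_dotProduct_le_norm_of_sum_eq_one {w : n → ℝ} (hw : 0 ≤ w) (hw1 : ∑ i, w i = 1)
    (f : n → ℝ) : |w ⬝ᵥ f| ≤ ‖f‖ :=
  calc |w ⬝ᵥ f| ≤ ∑ i, |w i * f i| := abs_sum_le_sum_abs _ _
    _ ≤ ∑ i, w i * ‖f‖ := sum_le_sum fun i _ => by
        rw [abs_mul, abs_of_nonneg (hw i)]
        exact mul_le_mul_of_nonneg_left (norm_le_pi_norm f i) (hw i)
    _ = ‖f‖ := by rw [← sum_mul, hw1, one_mul]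

lemma pi_norm_le_iSup_abs (f : n → ℝ) : ‖f‖ ≤ ⨆ i, |f i| :=
  (pi_norm_le_iff_of_nonneg (Real.iSup_nonneg fun _ => abs_nonneg _)).2
    fun i => le_ciSup (f := fun i => |f i|) (Set.finite_range _).bddAbove i

lemma dotProduct_eq_dotProduct_sub_smul_mulVec {R : Type*} [CommRing R] {M : Matrix n n R}
    {γ : R} {d b : n → R} (hd : d = b + γ • (d ᵥ* M)) (f : n → R) :
    b ⬝ᵥ f = d ⬝ᵥ (f - γ • (M *ᵥ f)) := by
  rw [eq_sub_of_add_eq hd.symm, sub_dotProduct, smul_dotProduct, ← dotProduct_mulVec,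
    dotProduct_sub, dotProduct_smul]

variable [DecidableEq n] {M : Matrix n n ℝ}

lemma norm_mulVec_le_of_mem_rowStochastic (hM : M ∈ rowStochastic ℝ n) (f : n → ℝ) :
    ‖M *ᵥ f‖ ≤ ‖f‖ :=
  (pi_norm_le_iff_of_nonneg (norm_nonneg f)).2 fun i =>
    abs_dotProduct_le_norm_of_sum_eq_one (fun j => hM.1 i j)
      (sum_row_of_mem_rowStochastic hM i) f

lemma norm_le_div_of_eq_add_smul_mulVec (hM : M ∈ rowStochastic ℝ n) {γ : ℝ} (hγ0 : 0 ≤ γ)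
    (hγ1 : γ < 1) {f δ : n → ℝ} (hf : f = δ + γ • (M *ᵥ f)) : ‖f‖ ≤ ‖δ‖ / (1 - γ) := by
  have hcontr : ‖f‖ ≤ ‖δ‖ + γ * ‖f‖ :=
    calc ‖f‖ = ‖δ + γ • (M *ᵥ f)‖ := congrArg norm hf
      _ ≤ ‖δ‖ + ‖γ • (M *ᵥ f)‖ := norm_add_le _ _
      _ = ‖δ‖ + γ * ‖M *ᵥ f‖ := by rw [norm_smul, Real.norm_of_nonneg hγ0]
      _ ≤ ‖δ‖ + γ * ‖f‖ := by gcongr; exact norm_mulVec_le_of_mem_rowStochastic hM f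
  rw [le_div_iff₀ (by linarith)]
  linarith

lemma nonneg_of_eq_add_smul_vecMul (hM : M ∈ rowStochastic ℝ n) {γ : ℝ} (hγ0 : 0 ≤ γ)
    (hγ1 : γ < 1) {d b : n → ℝ} (hb : 0 ≤ b) (hd : d = b + γ • (d ᵥ* M)) : 0 ≤ d := by
  set N : n → ℝ := fun i => (d i)⁻
  have hN : 0 ≤ N := fun i => negPart_nonneg _
  have hdN : 0 ≤ (d + N) ᵥ* M := nonneg_vecMul_of_mem_rowStochastic hM fun j =>
    neg_le_iff_add_nonneg'.1 (neg_le_negPart (d j))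
  have hN_le : ∀ i, N i ≤ γ * (N ᵥ* M) i := by
    intro i
    have hdi : d i = b i + γ * (d ᵥ* M) i := congrFun hd i
    have hbi : 0 ≤ b i := hb i
    have hdNi : 0 ≤ (d ᵥ* M) i + (N ᵥ* M) i := by
      simpa only [add_vecMul, Pi.add_apply, Pi.zero_apply] using hdN i
    show (d i)⁻ ≤ _
    rw [negPart_def]
    exact sup_le (by nlinarith [mul_nonneg hγ0 hdNi])
      (mul_nonneg hγ0 (nonneg_vecMul_of_mem_rowStochastic hM hN i))
  have hsum : ∑ i, N i ≤ γ * ∑ i, N i :=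
    calc ∑ i, N i ≤ ∑ i, γ * (N ᵥ* M) i := sum_le_sum fun i _ => hN_le i
      _ = γ * ∑ i, N i := by
        rw [← mul_sum, ← dotProduct_one, ← dotProduct_one, ← dotProduct_mulVec,
          one_vecMul_of_mem_rowStochastic hM]
  have hsum_nonneg : 0 ≤ ∑ i, N i := sum_nonneg fun i _ => hN i
  have hN0 : ∑ i, N i = 0 := le_antisymm (by nlinarith) hsum_nonneg
  intro i
  exact negPart_eq_zero.1 ((sum_eq_zero_iff_of_nonneg fun i _ => hN i).1 hN0 i (mem_univ i))

end Stochastic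

section MDP

variable {S A : Type*} [Fintype A]

def transitionMatrix (μ : S → A → ℝ) (P : S → A → S → ℝ) : Matrix S S ℝ :=
  Matrix.of fun s s' => ∑ a, μ s a * P s a s'

variable {P : S → A → S → ℝ}

lemma transitionMatrix_sub (μ ν : S → A → ℝ) :
    transitionMatrix (μ - ν) P = transitionMatrix μ P - transitionMatrix ν P := by
  ext s s'
  simp only [transitionMatrix, of_apply, Matrix.sub_apply, Pi.sub_apply, sub_mul,
    sum_sub_distrib]

variable [Fintype S]

lemma transitionMatrix_mulVec_apply (μ : S → A → ℝ) (f : S → ℝ) (s : S) :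
    (transitionMatrix μ P *ᵥ f) s = ∑ a, μ s a * (P s a ⬝ᵥ f) := by
  simp only [mulVec, dotProduct, transitionMatrix, of_apply, sum_mul, mul_sum, mul_assoc]
  exact sum_comm

lemma vecMul_transitionMatrix_apply (μ : S → A → ℝ) (x : S → ℝ) (s : S) :
    (x ᵥ* transitionMatrix μ P) s = ∑ s', ∑ a, x s' * μ s' a * P s' a s := by
  simp only [vecMul, dotProduct, transitionMatrix, of_apply, mul_sum, mul_assoc]

lemma transitionMatrix_mem_rowStochastic [DecidableEq S] {μ : S → A → ℝ}
    (hμ : ∀ s a, 0 ≤ μ s a) (hμ1 : ∀ s, ∑ a, μ s a = 1)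
    (hP : ∀ s a s', 0 ≤ P s a s') (hP1 : ∀ s a, ∑ s', P s a s' = 1) :
    transitionMatrix μ P ∈ rowStochastic ℝ S := by
  refine mem_rowStochastic_iff_sum.2
    ⟨fun s s' => sum_nonneg fun a _ => mul_nonneg (hμ s a) (hP s a s'), fun s => ?_⟩
  simp only [transitionMatrix, of_apply]
  rw [sum_comm]
  simp only [← mul_sum, hP1, mul_one, hμ1]

lemma transitionMatrix_mulVec_le (hP : ∀ s a s', 0 ≤ P s a s')
    (hP1 : ∀ s a, ∑ s', P s a s' = 1) (μ : S → A → ℝ) (f : S → ℝ) (s : S) :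
    (transitionMatrix μ P *ᵥ f) s ≤ (∑ a, |μ s a|) * ‖f‖ := by
  rw [transitionMatrix_mulVec_apply, sum_mul]
  refine sum_le_sum fun a _ => (le_abs_self _).trans ?_
  rw [abs_mul]
  exact mul_le_mul_of_nonneg_left
    (abs_dotProduct_le_norm_of_sum_eq_one (hP s a) (hP1 s a) f) (abs_nonneg _)

lemma sub_eq_add_smul_transitionMatrix_mulVec {γ : ℝ} {C π' : S → A → ℝ}
    (hπ'1 : ∀ s, ∑ a, π' s a = 1) {V V' : S → ℝ}
    (hV' : ∀ s, V' s = ∑ a, π' s a * (C s a + γ * ∑ s', P s a s' * V' s'))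
    {Adv : S → A → ℝ} (hAdv : ∀ s a, Adv s a = (C s a + γ * ∑ s', P s a s' * V s') - V s) :
    V' - V = (fun s => ∑ a, π' s a * Adv s a) + γ • (transitionMatrix π' P *ᵥ (V' - V)) := by
  ext s
  have hPsub : ∀ a, P s a ⬝ᵥ (V' - V) = ∑ s', P s a s' * V' s' - ∑ s', P s a s' * V s' :=
    fun a => dotProduct_sub _ _ _
  simp only [Pi.sub_apply, Pi.add_apply, Pi.smul_apply, smul_eq_mul,
    transitionMatrix_mulVec_apply, hPsub, hAdv]
  rw [hV' s, mul_sum]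
  conv_lhs => rw [← one_mul (V s), ← hπ'1 s, sum_mul, ← sum_sub_distrib]
  rw [← sum_add_distrib]
  exact sum_congr rfl fun a _ => by ring

lemma sub_smul_transitionMatrix_mulVec_le (hP : ∀ s a s', 0 ≤ P s a s')
    (hP1 : ∀ s a, ∑ s', P s a s' = 1) {γ : ℝ} (hγ0 : 0 ≤ γ) {π π' : S → A → ℝ}
    {f δ : S → ℝ} (hf : f = δ + γ • (transitionMatrix π' P *ᵥ f)) (s : S) :
    (f - γ • (transitionMatrix π P *ᵥ f)) s ≤ δ s + γ * ((∑ a, |π' s a - π s a|) * ‖f‖) :=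
  calc (f - γ • (transitionMatrix π P *ᵥ f)) s
        = δ s + γ * (transitionMatrix (π' - π) P *ᵥ f) s := by
          rw [transitionMatrix_sub, Pi.sub_apply, congrFun hf s]
          simp only [Pi.add_apply, Pi.smul_apply, smul_eq_mul, sub_mulVec, Pi.sub_apply]
          ring
    _ ≤ δ s + γ * ((∑ a, |π' s a - π s a|) * ‖f‖) := by
          gcongr
          exact transitionMatrix_mulVec_le hP hP1 (π' - π) f s

end MDP

theorem cpo_cost_upper_bound_general
    {S A : Type*} [Fintype S] [Fintype A]
    (γ : ℝ) (hγ0 : 0 ≤ γ) (hγ1 : γ < 1)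
    (P : S → A → S → ℝ) (hPnn : ∀ s a s', 0 ≤ P s a s')
    (hP1 : ∀ s a, ∑ s', P s a s' = 1)
    (C : S → A → ℝ) (ρ : S → ℝ) (hρnn : ∀ s, 0 ≤ ρ s)
    (π π' : S → A → ℝ)
    (hπnn : ∀ s a, 0 ≤ π s a) (hπ1 : ∀ s, ∑ a, π s a = 1)
    (hπ'nn : ∀ s a, 0 ≤ π' s a) (hπ'1 : ∀ s, ∑ a, π' s a = 1)
    (VC VC' : S → ℝ)
    (hVC' : ∀ s, VC' s = ∑ a, π' s a * (C s a + γ * ∑ s', P s a s' * VC' s'))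
    (AdvC : S → A → ℝ)
    (hAC : ∀ s a, AdvC s a = (C s a + γ * ∑ s', P s a s' * VC s') - VC s)
    (dvis : S → ℝ)
    (hd : ∀ s, dvis s = (1 - γ) * ρ s + γ * ∑ s'', ∑ a, dvis s'' * π s'' a * P s'' a s)
    (JC JC' : ℝ) (hJC : JC = ∑ s, ρ s * VC s) (hJC' : JC' = ∑ s, ρ s * VC' s)
    (εC : ℝ) (hεC : εC = ⨆ s, |∑ a, π' s a * AdvC s a|) :
    JC' - JC ≤ (1 / (1 - γ)) * ∑ s, dvis s *
      ((∑ a, π' s a * AdvC s a)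
        + (2 * γ * εC / (1 - γ)) * ((1 / 2) * ∑ a, |π' s a - π s a|)) := by
  classical
  have hγ : 0 < 1 - γ := by linarith
  set f := VC' - VC
  set δ : S → ℝ := fun s => ∑ a, π' s a * AdvC s a
  have hf : f = δ + γ • (transitionMatrix π' P *ᵥ f) :=
    sub_eq_add_smul_transitionMatrix_mulVec hπ'1 hVC' hAC
  have hfε : ‖f‖ ≤ εC / (1 - γ) := (norm_le_div_of_eq_add_smul_mulVec
    (transitionMatrix_mem_rowStochastic hπ'nn hπ'1 hPnn hP1) hγ0 hγ1 hf).trans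
    (by rw [hεC]; gcongr; exact pi_norm_le_iSup_abs δ)
  have hdvis : dvis = (1 - γ) • ρ + γ • (dvis ᵥ* transitionMatrix π P) := funext fun s => by
    rw [hd s, Pi.add_apply, Pi.smul_apply, Pi.smul_apply, vecMul_transitionMatrix_apply]; rfl
  have hdvis_nonneg : 0 ≤ dvis := nonneg_of_eq_add_smul_vecMul
    (transitionMatrix_mem_rowStochastic hπnn hπ1 hPnn hP1) hγ0 hγ1
    (fun s => mul_nonneg hγ.le (hρnn s)) hdvis
  have hu : f - γ • (transitionMatrix π P *ᵥ f) ≤ fun s =>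
      δ s + (2 * γ * εC / (1 - γ)) * ((1 / 2) * ∑ a, |π' s a - π s a|) := fun s =>
    calc (f - γ • (transitionMatrix π P *ᵥ f)) s
        ≤ δ s + γ * ((∑ a, |π' s a - π s a|) * ‖f‖) :=
          sub_smul_transitionMatrix_mulVec_le hPnn hP1 hγ0 hf s
      _ ≤ δ s + γ * ((∑ a, |π' s a - π s a|) * (εC / (1 - γ))) := by gcongr
      _ = _ := by beta_reduce; ring
  calc JC' - JC = (1 / (1 - γ)) * (((1 - γ) • ρ) ⬝ᵥ f) := by
        rw [smul_dotProduct, smul_eq_mul, ← mul_assoc, one_div_mul_cancel hγ.ne', one_mul,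
          hJC, hJC']
        exact (dotProduct_sub ρ VC' VC).symm
    _ = (1 / (1 - γ)) * (dvis ⬝ᵥ (f - γ • (transitionMatrix π P *ᵥ f))) := by
        rw [dotProduct_eq_dotProduct_sub_smul_mulVec hdvis]
    _ ≤ _ := mul_le_mul_of_nonneg_left
        (dotProduct_le_dotProduct_of_nonneg_left hu hdvis_nonneg) (one_div_nonneg.2 hγ.le)

/-- CPO-style cost upper bound (Corollary 2 of Achiam et al.). -/
theorem cpo_cost_upper_bound
    {S A : Type*} [Fintype S] [Fintype A] [Nonempty S]
    (γ : ℝ) (hγ0 : 0 ≤ γ) (hγ1 : γ < 1)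
    (P : S → A → S → ℝ) (hPnn : ∀ s a s', 0 ≤ P s a s')
    (hP1 : ∀ s a, ∑ s', P s a s' = 1)
    (C : S → A → ℝ) (ρ : S → ℝ) (hρnn : ∀ s, 0 ≤ ρ s) (hρ1 : ∑ s, ρ s = 1)
    (π π' : S → A → ℝ)
    (hπnn : ∀ s a, 0 ≤ π s a) (hπ1 : ∀ s, ∑ a, π s a = 1)
    (hπ'nn : ∀ s a, 0 ≤ π' s a) (hπ'1 : ∀ s, ∑ a, π' s a = 1)
    (VC VC' : S → ℝ)
    (hVC : ∀ s, VC s = ∑ a, π s a * (C s a + γ * ∑ s', P s a s' * VC s'))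
    (hVC' : ∀ s, VC' s = ∑ a, π' s a * (C s a + γ * ∑ s', P s a s' * VC' s'))
    (AdvC : S → A → ℝ)
    (hAC : ∀ s a, AdvC s a = (C s a + γ * ∑ s', P s a s' * VC s') - VC s)
    (dvis : S → ℝ)
    (hd : ∀ s, dvis s = (1 - γ) * ρ s + γ * ∑ s'', ∑ a, dvis s'' * π s'' a * P s'' a s)
    (JC JC' : ℝ) (hJC : JC = ∑ s, ρ s * VC s) (hJC' : JC' = ∑ s, ρ s * VC' s)
    (εC : ℝ) (hεC : εC = ⨆ s, |∑ a, π' s a * AdvC s a|) :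
    JC' - JC ≤ (1 / (1 - γ)) * ∑ s, dvis s *
      ((∑ a, π' s a * AdvC s a)
        + (2 * γ * εC / (1 - γ)) * ((1 / 2) * ∑ a, |π' s a - π s a|)) :=
  cpo_cost_upper_bound_general γ hγ0 hγ1 P hPnn hP1 C ρ hρnn π π' hπnn hπ1 hπ'nn hπ'1 VC VC' hVC'
    AdvC hAC dvis hd JC JC' hJC hJC' εC hεC
end

section
/- Multi-agent advantage decomposition: in a Markov game with n agents, for any joint policies π and π̄ and any ordering i_1,…,i_n of the agents, the joint advantage decomposes as E_{s∼d, a∼π̄}[A^π(s, a)] = Σ_{h=1}^n E_{s∼d, a_{i_{1:h}}∼π̄_{i_{1:h}}}[ A^{π}_{i_h}(s, a_{i_{1:h−1}}, a_{i_h}) ], where A^π_{i_h}(s, a_{i_{1:h−1}}, a_{i_h}) = Q^π(s, a_{i_{1:h}}) − Q^π(s, a_{i_{1:h−1}}) is the multi-agent advantage of agent i_h given the preceding agents' actions, with Q^π(s, a_{i_{1:h}}) = E_{a_{−i_{1:h}} ∼ π}[Q^π(s, a)]. -/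
open scoped BigOperators

/-- Multi-agent advantage decomposition: for any ordering of the agents (given by a
permutation σ), the expected joint advantage under π̄ decomposes as the telescoping sum
of the per-agent multi-agent advantages. -/
theorem multi_agent_advantage_decomposition
    {S : Type*} [Fintype S] (n : ℕ) (A : Fin n → Type*) [∀ i, Fintype (A i)]
    [∀ i, DecidableEq (A i)]
    (π πb : (i : Fin n) → S → A i → ℝ)
    (hπnn : ∀ i s a, 0 ≤ π i s a) (hπ1 : ∀ i s, ∑ a, π i s a = 1)
    (hπbnn : ∀ i s a, 0 ≤ πb i s a) (hπb1 : ∀ i s, ∑ a, πb i s a = 1)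
    (Q : S → ((i : Fin n) → A i) → ℝ)
    (d : S → ℝ)
    (σ : Equiv.Perm (Fin n))
    (Qbar : ℕ → S → ((i : Fin n) → A i) → ℝ)
    (hQbar : ∀ h s a, Qbar h s a =
      ∑ b : (i : Fin n) → A i,
        (∏ i, if (σ.symm i : ℕ) < h then (if b i = a i then (1 : ℝ) else 0)
              else π i s (b i)) * Q s b)
    (V : S → ℝ)
    (hV : ∀ s, V s = ∑ b : (i : Fin n) → A i, (∏ i, π i s (b i)) * Q s b) :
    ∑ s, d s * ∑ a : (i : Fin n) → A i, (∏ i, πb i s (a i)) * (Q s a - V s)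
      = ∑ h ∈ Finset.range n, ∑ s, d s *
          ∑ a : (i : Fin n) → A i,
            (∏ i, πb i s (a i)) * (Qbar (h + 1) s a - Qbar h s a) := by
  have hQn : ∀ s (a : (i : Fin n) → A i), Qbar n s a = Q s a := by
    intro s a
    rw [hQbar]
    have h1 : ∀ b : (i : Fin n) → A i,
        (∏ i, if ((σ.symm i : ℕ) < n) then (if b i = a i then (1:ℝ) else 0)
          else π i s (b i)) = if b = a then 1 else 0 := by
      intro b
      simp only [Fin.is_lt, if_true]
      rw [Finset.prod_boole]
      simp [funext_iff]
    simp only [h1]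
    simp
  have hQ0 : ∀ s (a : (i : Fin n) → A i), Qbar 0 s a = V s := by
    intro s a
    rw [hQbar, hV]
    simp
  rw [Finset.sum_comm]
  refine Finset.sum_congr rfl fun s _ => ?_
  rw [← Finset.mul_sum]
  congr 1
  rw [Finset.sum_comm]
  refine Finset.sum_congr rfl fun a _ => ?_
  rw [← Finset.mul_sum]
  congr 1
  rw [Finset.sum_range_sub (fun h => Qbar h s a), hQn, hQ0]
end
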